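/- (Lemma 1.1) For all sufficiently small ε > 0, the set S := {(t,v) ∈ Ω_ε : there exists (t',v') ∈ Ω_ε with (t',v') ≠ (t,v) such that φ_f(t,v) = ψ_f(t',v')} has empty interior in Ω_ε := I × (−ε, ε). -/

import Mathlib

noncomputable section
open Real Set
open scoped ContDiff

local notation "⟪" x ", " y "⟫" => @inner ℝ _ _ x y

/-- Euclidean 3-space. -/
abbrev E3 := EuclideanSpace ℝ (Fin 3)

/-- The vector (cross) product of `ℝ³`. -/
def cross3 (u v : E3) : E3 :=
  (WithLp.equiv 2 (Fin 3 → ℝ)).symm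
    ![u 1 * v 2 - u 2 * v 1, u 2 * v 0 - u 0 * v 2, u 0 * v 1 - u 1 * v 0]

/-!
Write `b` for the binormal and `σ = ±1` for the sign of `α`, which is constant on `I`. Since
`|cot β|` and `|cot β̌|` are bounded on `I`, there is `ρ > 0` with
`⟪ξ, σ b⟫ = sin β |sin α| ≥ ρ` and `⟪ξ̌, σ b⟫ = -sin β̌ |sin α| ≤ -ρ`. Hence
`φ_f (t, v) = c t + w` with `ρ ‖w‖ ≤ ⟪w, σ b t⟫` and `ψ_f (t', v') = c t' + w'` with
`ρ ‖w'‖ ≤ -⟪w', σ b t'⟫`, where `‖w‖ = |v|`, `‖w'‖ = |v'|`. If the two points agree,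
injectivity of `c` makes `t'` close to `t`; the tangential component of `c t' - c t = w - w'`
then gives `|t' - t| ≤ 2 (|v| + |v'|)`, and its `σ b t`-component, which is of second order
in `t' - t`, gives `ρ (|v| + |v'|) ≤ (4 M + 2 L) (|v| + |v'|)²` with `M` a bound for `‖c''‖`
and `L` a Lipschitz constant of `b`. So for small `ε` we get `v = v' = 0` and `t = t'`: the
set `S` is even empty.
-/

section Normed

variable {F : Type*} [NormedAddCommGroup F] [NormedSpace ℝ F]

theorem norm_sub_sub_smul_deriv_le {c : ℝ → F} {s : Set ℝ} {M t t' : ℝ} (hs : Convex ℝ s)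
    (hc : Differentiable ℝ c) (hc' : Differentiable ℝ (deriv c))
    (hM : ∀ x ∈ s, ‖deriv (deriv c) x‖ ≤ M) (ht : t ∈ s) (ht' : t' ∈ s) :
    ‖c t' - c t - (t' - t) • deriv c t‖ ≤ M * (t' - t) ^ 2 := by
  have hM0 : 0 ≤ M := (norm_nonneg _).trans (hM t ht)
  have hseg : uIcc t t' ⊆ s := by
    rw [← segment_eq_uIcc]; exact hs.segment_subset ht ht'
  have hlip : ∀ x ∈ uIcc t t', ‖deriv c x - deriv c t‖ ≤ M * |t' - t| := fun x hx =>
    calc ‖deriv c x - deriv c t‖ ≤ M * ‖x - t‖ :=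
          hs.norm_image_sub_le_of_norm_deriv_le (fun y _ => hc' y) hM ht (hseg hx)
      _ ≤ M * |t' - t| := mul_le_mul_of_nonneg_left (abs_sub_left_of_mem_uIcc hx) hM0
  have hderiv : ∀ x, HasDerivAt (fun x => c x - (x - t) • deriv c t)
      (deriv c x - deriv c t) x := fun x => by
    have := (hc x).hasDerivAt.sub (((hasDerivAt_id x).sub_const t).smul_const (deriv c t))
    rwa [one_smul] at this
  have := (convex_uIcc t t').norm_image_sub_le_of_norm_hasDerivWithin_le
    (fun x _ => (hderiv x).hasDerivWithinAt) hlip left_mem_uIcc right_mem_uIcc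
  rw [sub_self, zero_smul, sub_zero, sub_right_comm, Real.norm_eq_abs, mul_assoc,
    abs_mul_abs_self, ← sq] at this
  exact this

theorem abs_sub_le_two_mul_norm_sub {p p' e : F} {t t' M : ℝ} (he : ‖e‖ = 1)
    (hT : ‖p' - p - (t' - t) • e‖ ≤ M * (t' - t) ^ 2) (hclose : 2 * M * |t' - t| ≤ 1) :
    |t' - t| ≤ 2 * ‖p' - p‖ := by
  have hsq : M * (t' - t) ^ 2 ≤ |t' - t| / 2 := by
    have := mul_le_mul_of_nonneg_right hclose (abs_nonneg (t' - t))
    rw [← sq_abs]; linarith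
  have : |t' - t| ≤ ‖p' - p‖ + ‖p' - p - (t' - t) • e‖ := by
    simpa [norm_smul, he] using norm_sub_le (p' - p) (p' - p - (t' - t) • e)
  linarith

end Normed

theorem IsCompact.exists_pos_dist_lt_of_injOn {X Y : Type*} [PseudoMetricSpace X] [MetricSpace Y]
    {f : X → Y} {s : Set X} (hs : IsCompact s) (hf : ContinuousOn f s) (hinj : InjOn f s)
    {δ : ℝ} (hδ : 0 < δ) :
    ∃ η > 0, ∀ x ∈ s, ∀ y ∈ s, dist (f x) (f y) < η → dist x y < δ := by
  set K := s ×ˢ s ∩ {p | δ ≤ dist p.1 p.2}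
  have hK : IsCompact K :=
    (hs.prod hs).inter_right (isClosed_le continuous_const continuous_dist)
  have hcont : ContinuousOn (fun p : X × X => dist (f p.1) (f p.2)) K :=
    continuous_dist.comp_continuousOn <| (hf.comp continuousOn_fst fun p hp => hp.1.1).prodMk
      (hf.comp continuousOn_snd fun p hp => hp.1.2)
  have hpos : ∀ p ∈ K, 0 < dist (f p.1) (f p.2) := fun p hp => dist_pos.2 fun h => by
    have h2 : δ ≤ dist p.1 p.2 := hp.2
    rw [hinj hp.1.1 hp.1.2 h, dist_self] at h2
    exact h2.not_gt hδ
  obtain ⟨η, hη, hle⟩ := hK.exists_forall_le' hcont hpos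
  exact ⟨η, hη, fun x hx y hy hxy => not_le.1 fun h => (hle (x, y) ⟨⟨hx, hy⟩, h⟩).not_gt hxy⟩

section InnerProductSpace

variable {F : Type*} [NormedAddCommGroup F] [InnerProductSpace ℝ F]

theorem inner_deriv_eq_zero_of_norm_eq {f : ℝ → F} {s : Set ℝ} {r x : ℝ} (hs : UniqueDiffOn ℝ s)
    (hf : DifferentiableAt ℝ f x) (h : ∀ y ∈ s, ‖f y‖ = r) (hx : x ∈ s) :
    ⟪f x, deriv f x⟫ = 0 := by
  have hsq : HasDerivWithinAt (‖f ·‖ ^ 2) 0 s x :=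
    (hasDerivWithinAt_const x s (r ^ 2)).congr (fun y hy => by rw [h y hy]) (by rw [h x hx])
  have := (hs x hx).eq_deriv _ hf.hasDerivAt.norm_sq.hasDerivWithinAt hsq
  linarith

theorem norm_cos_smul_add_sin_smul {u v : F} (hu : ‖u‖ = 1) (hv : ‖v‖ = 1) (huv : ⟪u, v⟫ = 0)
    (θ : ℝ) : ‖cos θ • u + sin θ • v‖ = 1 := by
  rw [norm_eq_sqrt_real_inner]
  simp only [inner_add_left, inner_add_right, real_inner_smul_left, real_inner_smul_right, huv,
    real_inner_comm u v]
  rw [real_inner_self_eq_norm_sq, real_inner_self_eq_norm_sq, hu, hv]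
  simp [← sq, cos_sq_add_sin_sq]

theorem inner_sub_le_of_norm_sub_sub_smul_le {p p' e b : F} {t t' M : ℝ} (hb : ‖b‖ ≤ 1)
    (heb : ⟪e, b⟫ = 0) (hT : ‖p' - p - (t' - t) • e‖ ≤ M * (t' - t) ^ 2) :
    ⟪p' - p, b⟫ ≤ M * (t' - t) ^ 2 :=
  calc ⟪p' - p, b⟫ = ⟪p' - p - (t' - t) • e, b⟫ := by
        simp only [inner_sub_left, real_inner_smul_left, heb, mul_zero, sub_zero]
    _ ≤ ‖p' - p - (t' - t) • e‖ * ‖b‖ := real_inner_le_norm _ _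
    _ ≤ M * (t' - t) ^ 2 := (mul_le_of_le_one_right (norm_nonneg _) hb).trans hT

theorem eq_zero_of_add_eq_add {p p' e b b' w w' : F} {t t' M L ρ : ℝ} (hM : 0 ≤ M)
    (hL : 0 ≤ L) (he : ‖e‖ = 1) (hb : ‖b‖ ≤ 1) (heb : ⟪e, b⟫ = 0)
    (hbb' : ‖b - b'‖ ≤ L * |t - t'|) (hT : ‖p' - p - (t' - t) • e‖ ≤ M * (t' - t) ^ 2)
    (hclose : 2 * M * |t' - t| ≤ 1) (hw : ρ * ‖w‖ ≤ ⟪w, b⟫) (hw' : ρ * ‖w'‖ ≤ ⟪w', -b'⟫)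
    (hsmall : (4 * M + 2 * L) * (‖w‖ + ‖w'‖) < ρ) (heq : p + w = p' + w') :
    w = 0 ∧ w' = 0 ∧ t = t' := by
  rw [inner_neg_right] at hw'
  set S := ‖w‖ + ‖w'‖ with hSdef
  have hS : 0 ≤ S := by positivity
  have hd : p' - p = w - w' := by rw [sub_eq_sub_iff_add_eq_add, ← heq, add_comm]
  have htt : |t' - t| ≤ 2 * S :=
    (abs_sub_le_two_mul_norm_sub he hT hclose).trans (by rw [hd]; gcongr; exact norm_sub_le _ _)
  have hupper : ⟪p' - p, b⟫ ≤ 4 * M * S ^ 2 := by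
    have : (t' - t) ^ 2 ≤ (2 * S) ^ 2 := by rw [← sq_abs]; gcongr
    nlinarith [inner_sub_le_of_norm_sub_sub_smul_le hb heb hT]
  have hlower : ρ * S - 2 * L * S ^ 2 ≤ ⟪p' - p, b⟫ := by
    have hrot : |⟪w', b - b'⟫| ≤ S * (L * (2 * S)) := by
      refine (abs_real_inner_le_norm _ _).trans (mul_le_mul (by simp [S]) (hbb'.trans ?_)
        (norm_nonneg _) hS)
      rw [abs_sub_comm]; gcongr
    have : ⟪p' - p, b⟫ = ⟪w, b⟫ - ⟪w', b'⟫ - ⟪w', b - b'⟫ := by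
      rw [hd, inner_sub_left, inner_sub_right]; ring
    nlinarith [abs_le.1 hrot]
  have hS0 : S = 0 := by nlinarith
  obtain ⟨hw0, hw'0⟩ : ‖w‖ = 0 ∧ ‖w'‖ = 0 := by
    constructor <;> linarith [norm_nonneg w, norm_nonneg w']
  refine ⟨norm_eq_zero.1 hw0, norm_eq_zero.1 hw'0, ?_⟩
  rw [hS0, mul_zero] at htt
  exact (sub_eq_zero.1 (abs_nonpos_iff.1 htt)).symm

/-- `φ_f = origami c ξ ξ̌` and `ψ_f = origami c ξ̌ ξ`. -/
def origami (c X Y : ℝ → F) (p : ℝ × ℝ) : F :=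
  c p.1 + p.2 • if 0 ≤ p.2 then X p.1 else Y p.1

theorem origami_apply (c X Y : ℝ → F) (t v : ℝ) :
    origami c X Y (t, v) = if 0 ≤ v then c t + v • X t else c t + v • Y t := by
  unfold origami; split_ifs <;> rfl

theorem exists_origami_eq_add {c X Y : ℝ → F} {b : F} {ρ t : ℝ} (hX : ‖X t‖ = 1)
    (hY : ‖Y t‖ = 1) (hXb : ρ ≤ ⟪X t, b⟫) (hYb : ⟪Y t, b⟫ ≤ -ρ) (v : ℝ) :
    ∃ w, origami c X Y (t, v) = c t + w ∧ ‖w‖ = |v| ∧ ρ * ‖w‖ ≤ ⟪w, b⟫ := by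
  refine ⟨v • if 0 ≤ v then X t else Y t, rfl, ?_⟩
  split_ifs with hv
  · rw [norm_smul, hX, real_inner_smul_left, Real.norm_eq_abs, abs_of_nonneg hv]
    exact ⟨mul_one v, by nlinarith⟩
  · rw [norm_smul, hY, real_inner_smul_left, Real.norm_eq_abs, abs_of_neg (not_le.1 hv)]
    exact ⟨mul_one (-v), by nlinarith⟩

theorem exists_pos_origami_eq_origami_swap {c B X Y : ℝ → F} {s : Set ℝ} {L : NNReal} {ρ : ℝ}
    (hs : IsCompact s) (hs' : Convex ℝ s) (hc : ContDiff ℝ 2 c) (hinj : InjOn c s)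
    (hunit : ∀ t ∈ s, ‖deriv c t‖ = 1) (hB : ∀ t ∈ s, ‖B t‖ ≤ 1)
    (hcB : ∀ t ∈ s, ⟪deriv c t, B t⟫ = 0) (hBL : LipschitzOnWith L B s)
    (hX : ∀ t ∈ s, ‖X t‖ = 1) (hY : ∀ t ∈ s, ‖Y t‖ = 1) (hρ : 0 < ρ)
    (hXB : ∀ t ∈ s, ρ ≤ ⟪X t, B t⟫) (hYB : ∀ t ∈ s, ⟪Y t, B t⟫ ≤ -ρ) :
    ∃ ε₀ > 0, ∀ p ∈ s ×ˢ Ioo (-ε₀) ε₀, ∀ q ∈ s ×ˢ Ioo (-ε₀) ε₀,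
      origami c X Y p = origami c Y X q → p = q := by
  obtain ⟨hc1, -, hc'⟩ := (contDiff_succ_iff_deriv (n := 1)).1 hc
  obtain ⟨M, hM0, hM⟩ : ∃ M, 0 ≤ M ∧ ∀ x ∈ s, ‖deriv (deriv c) x‖ ≤ M :=
    let ⟨M, hM⟩ := hs.exists_bound_of_continuousOn (hc'.continuous_deriv le_rfl).continuousOn
    ⟨max M 0, le_max_right _ _, fun x hx => (hM x hx).trans (le_max_left _ _)⟩
  obtain ⟨η, hη, hsep⟩ := hs.exists_pos_dist_lt_of_injOn hc1.continuous.continuousOn hinj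
    (δ := 1 / (2 * M + 1)) (by positivity)
  have hK : 0 < 4 * M + 2 * L + 1 := by positivity
  refine ⟨min η (ρ / (4 * M + 2 * L + 1)) / 2, by positivity, ?_⟩
  rintro ⟨t, v⟩ ⟨ht, hv⟩ ⟨t', v'⟩ ⟨ht', hv'⟩ hpq
  have hvv' : |v| + |v'| < min η (ρ / (4 * M + 2 * L + 1)) := by
    linarith [abs_lt.2 hv, abs_lt.2 hv']
  obtain ⟨w, hpw, hw, hcone⟩ := exists_origami_eq_add (c := c) (hX t ht) (hY t ht)
    (hXB t ht) (hYB t ht) v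
  obtain ⟨w', hqw', hw', hcone'⟩ := exists_origami_eq_add (c := c) (b := -B t') (ρ := ρ)
    (hY t' ht') (hX t' ht') (by rw [inner_neg_right]; linarith [hYB t' ht'])
    (by rw [inner_neg_right]; linarith [hXB t' ht']) v'
  rw [hpw, hqw'] at hpq
  have hclose : 2 * M * |t' - t| ≤ 1 := by
    have htt := hsep t ht t' ht' <| by
      rw [dist_eq_norm, sub_eq_sub_iff_add_eq_add.2 (hpq.trans (add_comm _ _))]
      exact (norm_sub_le _ _).trans_lt (by linarith [min_le_left η (ρ / (4 * M + 2 * L + 1))])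
    rw [Real.dist_eq, abs_sub_comm, lt_div_iff₀ (by positivity)] at htt
    nlinarith [abs_nonneg (t' - t)]
  obtain ⟨hw0, hw'0, rfl⟩ := eq_zero_of_add_eq_add hM0 L.2 (hunit t ht) (hB t ht) (hcB t ht)
    (by simpa [dist_eq_norm] using hBL.dist_le_mul t ht t' ht')
    (norm_sub_sub_smul_deriv_le hs' hc1 (hc'.differentiable one_ne_zero) hM ht ht')
    hclose hcone hcone' (by
      rw [hw, hw']
      calc (4 * M + 2 * L) * (|v| + |v'|) ≤ (4 * M + 2 * L + 1) * (|v| + |v'|) :=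
            mul_le_mul_of_nonneg_right (by linarith) (by positivity)
        _ < ρ := (lt_div_iff₀' hK).1 (hvv'.trans_le (min_le_right _ _)))
    hpq
  rw [hw0, norm_zero, eq_comm, abs_eq_zero] at hw
  rw [hw'0, norm_zero, eq_comm, abs_eq_zero] at hw'
  rw [hw, hw']

end InnerProductSpace

theorem IsPreconnected.exists_mul_eq_abs {X : Type*} [TopologicalSpace X] {s : Set X}
    {f : X → ℝ} (hs : IsPreconnected s) (hf : ContinuousOn f s) (hf0 : ∀ x ∈ s, f x ≠ 0) :
    ∃ σ : ℝ, |σ| = 1 ∧ ∀ x ∈ s, σ * f x = |f x| := by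
  rcases hs.eq_or_eq_neg_of_sq_eq hf.abs hf (fun x _ => by simp [sq_abs]) (hf0 _ ·) with h | h
  · exact ⟨1, by simp, fun x hx => by simp [h hx]⟩
  · exact ⟨-1, by simp, fun x hx => by simp [h hx]⟩

theorem abs_le_sin_mul_add_abs {θ x y : ℝ} (hθ : 0 ≤ sin θ) (h : cos θ * x = y * sin θ) :
    |x| ≤ sin θ * (|x| + |y|) := by
  have hsq : x ^ 2 ≤ (sin θ * (|x| + |y|)) ^ 2 :=
    calc x ^ 2 = sin θ ^ 2 * (x ^ 2 + y ^ 2) := by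
          linear_combination (cos θ * x + y * sin θ) * h - x ^ 2 * sin_sq_add_cos_sq θ
      _ ≤ sin θ ^ 2 * (|x| + |y|) ^ 2 := by
          gcongr; nlinarith [sq_abs x, sq_abs y, abs_nonneg x, abs_nonneg y]
      _ = (sin θ * (|x| + |y|)) ^ 2 := by ring
  simpa [abs_of_nonneg (mul_nonneg hθ (add_nonneg (abs_nonneg x) (abs_nonneg y)))]
    using sq_le_sq.1 hsq

theorem IsCompact.exists_pos_le_sin_mul {X : Type*} [TopologicalSpace X] {s : Set X}
    {x A g : X → ℝ} (hs : IsCompact s) (hx : ContinuousOn x s) (hA : ContinuousOn A s)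
    (hg : ContinuousOn g s) (hx0 : ∀ t ∈ s, x t ≠ 0) (hg0 : ∀ t ∈ s, 0 < g t) :
    ∃ ρ > 0, ∀ t ∈ s, ∀ θ y : ℝ, 0 ≤ sin θ → cos θ * x t = y * sin θ → |y| ≤ A t →
      ρ ≤ sin θ * g t := by
  have hden : ∀ t ∈ s, 0 < |x t| + |A t| := fun t ht => by
    have := abs_pos.2 (hx0 t ht); positivity
  obtain ⟨ρ, hρ, hle⟩ := hs.exists_forall_le' (f := fun t => g t * |x t| / (|x t| + |A t|))
    (hg.mul hx.abs |>.div (hx.abs.add hA.abs) fun t ht => (hden t ht).ne')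
    (fun t ht => div_pos (mul_pos (hg0 t ht) (abs_pos.2 (hx0 t ht))) (hden t ht))
  refine ⟨ρ, hρ, fun t ht θ y hθ h hy => (hle t ht).trans ?_⟩
  rw [div_le_iff₀ (hden t ht)]
  have hxA : |x t| ≤ sin θ * (|x t| + |A t|) := (abs_le_sin_mul_add_abs hθ h).trans
    (mul_le_mul_of_nonneg_left (by linarith [le_abs_self (A t)]) hθ)
  nlinarith [mul_le_mul_of_nonneg_left hxA (hg0 t ht).le]

theorem sin_ne_zero_of_abs_mem_Ioo {x : ℝ} (h0 : 0 < |x|) (hπ : |x| < π) : sin x ≠ 0 := by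
  rw [Ne, sin_eq_zero_iff_of_lt_of_lt ((neg_abs_le x).trans_lt' (neg_lt_neg hπ))
    ((le_abs_self x).trans_lt hπ)]
  exact abs_pos.1 h0

theorem inner_E3 (x y : E3) : ⟪x, y⟫ = x 0 * y 0 + x 1 * y 1 + x 2 * y 2 := by
  simp only [PiLp.inner_apply, RCLike.inner_apply, conj_trivial, Fin.sum_univ_three]; ring

theorem cross3_apply (u v : E3) :
    cross3 u v 0 = u 1 * v 2 - u 2 * v 1 ∧ cross3 u v 1 = u 2 * v 0 - u 0 * v 2 ∧
      cross3 u v 2 = u 0 * v 1 - u 1 * v 0 :=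
  ⟨rfl, rfl, rfl⟩

theorem inner_cross3_self_left (u v : E3) : ⟪u, cross3 u v⟫ = 0 := by
  obtain ⟨h0, h1, h2⟩ := cross3_apply u v
  rw [inner_E3, h0, h1, h2]; ring

theorem inner_cross3_self_right (u v : E3) : ⟪v, cross3 u v⟫ = 0 := by
  obtain ⟨h0, h1, h2⟩ := cross3_apply u v
  rw [inner_E3, h0, h1, h2]; ring

theorem inner_cross3_cross3 (u v : E3) :
    ⟪cross3 u v, cross3 u v⟫ = ⟪u, u⟫ * ⟪v, v⟫ - ⟪u, v⟫ ^ 2 := by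
  obtain ⟨h0, h1, h2⟩ := cross3_apply u v
  simp only [inner_E3, h0, h1, h2]; ring

theorem norm_cross3 {u v : E3} (hu : ‖u‖ = 1) (hv : ‖v‖ = 1) (huv : ⟪u, v⟫ = 0) :
    ‖cross3 u v‖ = 1 := by
  rw [norm_eq_sqrt_real_inner, inner_cross3_cross3, real_inner_self_eq_norm_sq,
    real_inner_self_eq_norm_sq, hu, hv, huv]
  norm_num

theorem ContDiffOn.cross3 {n : WithTop ℕ∞} {g h : ℝ → E3} {s : Set ℝ} (hg : ContDiffOn ℝ n g s)
    (hh : ContDiffOn ℝ n h s) : ContDiffOn ℝ n (fun t => cross3 (g t) (h t)) s := by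
  have hcoord : ∀ (f : ℝ → E3) (i : Fin 3), ContDiffOn ℝ n f s →
      ContDiffOn ℝ n (fun t => f t i) s := fun f i hf => (contDiffOn_piLp 2).1 hf i
  refine contDiffOn_piLp' 2 fun i => ?_
  fin_cases i <;>
    exact ((hcoord g _ hg).mul (hcoord h _ hh)).sub ((hcoord g _ hg).mul (hcoord h _ hh))

namespace SpaceCurve

def curvature (c : ℝ → E3) (t : ℝ) : ℝ := ‖deriv (deriv c) t‖

def normal (c : ℝ → E3) (t : ℝ) : E3 := (curvature c t)⁻¹ • deriv (deriv c) t

def binormal (c : ℝ → E3) (t : ℝ) : E3 := cross3 (deriv c t) (normal c t)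

def torsion (c : ℝ → E3) (t : ℝ) : ℝ := ⟪deriv (normal c) t, binormal c t⟫

/-- `ξ = ruling c α β` and `ξ̌ = ruling c (-α) β̌`. -/
def ruling (c : ℝ → E3) (α β : ℝ → ℝ) (t : ℝ) : E3 :=
  cos (β t) • deriv c t + sin (β t) • (cos (α t) • normal c t + sin (α t) • binormal c t)

variable {c : ℝ → E3} {t : ℝ}

theorem norm_normal (h : curvature c t ≠ 0) : ‖normal c t‖ = 1 := by
  rw [normal, norm_smul, norm_inv, Real.norm_eq_abs, curvature, abs_norm]
  exact inv_mul_cancel₀ h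

theorem inner_deriv_normal_eq_zero {a b : ℝ} (hab : a < b) (hc : ContDiff ℝ 2 c)
    (harc : ∀ t ∈ Icc a b, ‖deriv c t‖ = 1) (ht : t ∈ Icc a b) :
    ⟪deriv c t, normal c t⟫ = 0 := by
  have hc' := ((contDiff_succ_iff_deriv (n := 1)).1 hc).2.2
  rw [normal, real_inner_smul_right, inner_deriv_eq_zero_of_norm_eq (uniqueDiffOn_Icc hab)
    ((hc'.differentiable one_ne_zero) t) harc ht, mul_zero]

theorem norm_ruling (he : ‖deriv c t‖ = 1) (hn : ‖normal c t‖ = 1)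
    (hen : ⟪deriv c t, normal c t⟫ = 0) (α β : ℝ → ℝ) : ‖ruling c α β t‖ = 1 := by
  refine norm_cos_smul_add_sin_smul he (norm_cos_smul_add_sin_smul hn
    (norm_cross3 he hn hen) (inner_cross3_self_right _ _) _) ?_ _
  simp only [inner_add_right, real_inner_smul_right, hen, inner_cross3_self_left]
  ring

theorem inner_ruling_binormal (he : ‖deriv c t‖ = 1) (hn : ‖normal c t‖ = 1)
    (hen : ⟪deriv c t, normal c t⟫ = 0) (α β : ℝ → ℝ) :
    ⟪ruling c α β t, binormal c t⟫ = sin (β t) * sin (α t) := by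
  simp only [ruling, binormal, inner_add_left, real_inner_smul_left, inner_cross3_self_left,
    inner_cross3_self_right, real_inner_self_eq_norm_sq, norm_cross3 he hn hen]
  ring

theorem contDiff_deriv_deriv (hc : ContDiff ℝ 3 c) : ContDiff ℝ 1 (deriv (deriv c)) :=
  ((contDiff_succ_iff_deriv (n := 1)).1
    ((contDiff_succ_iff_deriv (n := 2)).1 hc).2.2).2.2

theorem contDiffOn_normal (hc : ContDiff ℝ 3 c) :
    ContDiffOn ℝ 1 (normal c) {t | deriv (deriv c) t ≠ 0} :=
  have hc'' := (contDiff_deriv_deriv hc).contDiffOn (s := {t | deriv (deriv c) t ≠ 0})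
  ((hc''.norm ℝ fun _ ht => ht).inv fun _ ht => norm_ne_zero_iff.2 ht).smul hc''

theorem contDiffOn_binormal (hc : ContDiff ℝ 3 c) :
    ContDiffOn ℝ 1 (binormal c) {t | deriv (deriv c) t ≠ 0} :=
  ((contDiff_succ_iff_deriv (n := 2)).1 hc).2.2.contDiffOn.of_le (by norm_num)
    |>.cross3 (contDiffOn_normal hc)

theorem continuousOn_torsion (hc : ContDiff ℝ 3 c) :
    ContinuousOn (torsion c) {t | deriv (deriv c) t ≠ 0} :=
  ((contDiffOn_normal hc).continuousOn_deriv_of_isOpen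
    (isOpen_ne_fun (contDiff_deriv_deriv hc).continuous continuous_const) le_rfl).inner
    (contDiffOn_binormal hc).continuousOn

theorem exists_binormal_separating_rulings {a b : ℝ} {α β βc : ℝ → ℝ} (hab : a < b)
    (hc : ContDiff ℝ 3 c) (harc : ∀ t ∈ Icc a b, ‖deriv c t‖ = 1)
    (hκ : ∀ t ∈ Icc a b, curvature c t ≠ 0) (hα : ContDiff ℝ 1 α)
    (hsinα : ∀ t ∈ Icc a b, sin (α t) ≠ 0)
    (hβ : ∀ t ∈ Icc a b, 0 ≤ sin (β t) ∧
      cos (β t) * (curvature c t * sin (α t)) = (deriv α t + torsion c t) * sin (β t))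
    (hβc : ∀ t ∈ Icc a b, 0 ≤ sin (βc t) ∧
      cos (βc t) * (curvature c t * sin (α t)) = (deriv α t - torsion c t) * sin (βc t)) :
    ∃ ρ > 0, ∃ B : ℝ → E3, ∃ L, LipschitzOnWith L B (Icc a b) ∧ ∀ t ∈ Icc a b,
      ‖B t‖ ≤ 1 ∧ ⟪deriv c t, B t⟫ = 0 ∧ ρ ≤ ⟪ruling c α β t, B t⟫ ∧
        ⟪ruling c (-α) βc t, B t⟫ ≤ -ρ := by
  have hIU : Icc a b ⊆ {t | deriv (deriv c) t ≠ 0} := fun t ht =>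
    norm_ne_zero_iff.1 (hκ t ht)
  have hsinαc : Continuous fun t => sin (α t) := continuous_sin.comp hα.continuous
  obtain ⟨σ, hσ, hσα⟩ := isPreconnected_Icc.exists_mul_eq_abs hsinαc.continuousOn hsinα
  obtain ⟨ρ, hρ, hρβ⟩ := isCompact_Icc.exists_pos_le_sin_mul
    (x := fun t => curvature c t * sin (α t)) (A := fun t => |deriv α t| + |torsion c t|)
    (g := fun t => |sin (α t)|)
    (((contDiff_deriv_deriv hc).continuous.norm.mul hsinαc).continuousOn)
    (((hα.continuous_deriv le_rfl).abs.continuousOn).add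
      ((continuousOn_torsion hc).mono hIU).abs)
    hsinαc.abs.continuousOn (fun t ht => mul_ne_zero (hκ t ht) (hsinα t ht))
    (fun t ht => abs_pos.2 (hsinα t ht))
  obtain ⟨L, hL⟩ := (((contDiffOn_binormal hc).const_smul σ).mono hIU).exists_lipschitzOnWith
    one_ne_zero (convex_Icc a b) isCompact_Icc
  refine ⟨ρ, hρ, σ • binormal c, L, hL, fun t ht => ?_⟩
  have hn := norm_normal (hκ t ht)
  have hen := inner_deriv_normal_eq_zero hab (hc.of_le (by norm_num)) harc ht
  have hb := inner_ruling_binormal (harc t ht) hn hen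
  simp only [Pi.smul_apply, real_inner_smul_right]
  refine ⟨?_, ?_, ?_, ?_⟩
  · rw [norm_smul, Real.norm_eq_abs, hσ, one_mul, binormal, norm_cross3 (harc t ht) hn hen]
  · rw [binormal, inner_cross3_self_left, mul_zero]
  · have := hρβ t ht (β t) _ (hβ t ht).1 (hβ t ht).2 (abs_add_le _ _)
    rw [← hσα t ht] at this
    rw [hb]; linarith
  · have := hρβ t ht (βc t) _ (hβc t ht).1 (hβc t ht).2 (abs_sub _ _)
    rw [← hσα t ht] at this
    rw [hb, Pi.neg_apply, sin_neg]; linarith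

end SpaceCurve

open SpaceCurve

/-- Lemma 1.1: for all sufficiently small `ε > 0`, the set
`S = {(t,v) ∈ Ω_ε : ∃ (t',v') ∈ Ω_ε, (t',v') ≠ (t,v), φ_f(t,v) = ψ_f(t',v')}`
has empty interior in `Ω_ε = I × (-ε, ε)`; here this is expressed by saying that
no nonempty relatively open subset of `Ω_ε` is contained in `S`. -/
theorem stmt7 (a b : ℝ) (hab : a < b)
    (c : ℝ → E3) (hc : ContDiff ℝ ∞ c) (hinj : InjOn c (Icc a b))
    (harc : ∀ t ∈ Icc a b, ‖deriv c t‖ = 1)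
    (κ : ℝ → ℝ) (hκ : ∀ t, κ t = ‖deriv (deriv c) t‖)
    (hκpos : ∀ t ∈ Icc a b, 0 < κ t)
    (e n bi : ℝ → E3) (τ : ℝ → ℝ)
    (he : ∀ t, e t = deriv c t)
    (hn : ∀ t, n t = (κ t)⁻¹ • deriv (deriv c) t)
    (hbi : ∀ t, bi t = cross3 (e t) (n t))
    (hτ : ∀ t, τ t = ⟪deriv n t, bi t⟫)
    (α : ℝ → ℝ) (hα : ContDiff ℝ ∞ α)
    (hα1 : ∀ t ∈ Icc a b, 0 < |α t| ∧ |α t| < π / 2)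
    -- `β` and `β̌` are determined by `cot β = (α' + τ)/(κ sin α)`,
    -- `cot β̌ = (α' - τ)/(κ sin α)` with values in `(0, π)`:
    (β βc : ℝ → ℝ)
    (hβ : ∀ t ∈ Icc a b, 0 < β t ∧ β t < π ∧
      cos (β t) * (κ t * sin (α t)) = (deriv α t + τ t) * sin (β t))
    (hβc : ∀ t ∈ Icc a b, 0 < βc t ∧ βc t < π ∧
      cos (βc t) * (κ t * sin (α t)) = (deriv α t - τ t) * sin (βc t))
    (ξ ξc : ℝ → E3)
    (hξ : ∀ t, ξ t = cos (β t) • e t +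
      sin (β t) • (cos (α t) • n t + sin (α t) • bi t))
    (hξc : ∀ t, ξc t = cos (βc t) • e t +
      sin (βc t) • (cos (-α t) • n t + sin (-α t) • bi t))
    (f fc : ℝ → ℝ → E3)
    (hf : ∀ t v, f t v = c t + v • ξ t)
    (hfc : ∀ t v, fc t v = c t + v • ξc t)
    (φ ψ : ℝ × ℝ → E3)
    (hφ : ∀ t v, φ (t, v) = if 0 ≤ v then f t v else fc t v)
    (hψ : ∀ t v, ψ (t, v) = if 0 ≤ v then fc t v else f t v) :
    ∃ ε₀ > (0 : ℝ), ∀ ε : ℝ, 0 < ε → ε ≤ ε₀ →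
      ∀ W : Set (ℝ × ℝ), IsOpen W →
        (∀ p ∈ W ∩ (Icc a b ×ˢ Ioo (-ε) ε),
          ∃ q ∈ Icc a b ×ˢ Ioo (-ε) ε, q ≠ p ∧ φ p = ψ q) →
        W ∩ (Icc a b ×ˢ Ioo (-ε) ε) = ∅ := by
  obtain rfl : e = deriv c := funext he
  obtain rfl : κ = curvature c := funext hκ
  obtain rfl : n = normal c := funext hn
  obtain rfl : bi = binormal c := funext hbi
  obtain rfl : τ = torsion c := funext hτ
  obtain rfl : ξ = ruling c α β := funext hξ
  obtain rfl : ξc = ruling c (-α) βc := funext hξc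
  have hc3 : ContDiff ℝ 3 c := hc.of_le ENat.LEInfty.out
  have hunit : ∀ α β, ∀ t ∈ Icc a b, ‖ruling c α β t‖ = 1 := fun _ _ t ht =>
    norm_ruling (harc t ht) (norm_normal (hκpos t ht).ne') (inner_deriv_normal_eq_zero hab
      (hc3.of_le (by norm_num)) harc ht) _ _
  obtain ⟨ρ, hρ, B, L, hBL, hB⟩ := exists_binormal_separating_rulings hab hc3 harc
    (fun t ht => (hκpos t ht).ne') (hα.of_le ENat.LEInfty.out)
    (fun t ht => sin_ne_zero_of_abs_mem_Ioo (hα1 t ht).1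
      ((hα1 t ht).2.trans (by linarith [pi_pos])))
    (fun t ht => ⟨(sin_pos_of_pos_of_lt_pi (hβ t ht).1 (hβ t ht).2.1).le, (hβ t ht).2.2⟩)
    (fun t ht => ⟨(sin_pos_of_pos_of_lt_pi (hβc t ht).1 (hβc t ht).2.1).le, (hβc t ht).2.2⟩)
  obtain ⟨ε₀, hε₀, hsep⟩ := exists_pos_origami_eq_origami_swap isCompact_Icc (convex_Icc a b)
    (hc.of_le ENat.LEInfty.out) hinj harc (fun t ht => (hB t ht).1)
    (fun t ht => (hB t ht).2.1) hBL (hunit α β) (hunit (-α) βc) hρ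
    (fun t ht => (hB t ht).2.2.1) (fun t ht => (hB t ht).2.2.2)
  refine ⟨ε₀, hε₀, fun ε _ hεε₀ W _ hW => eq_empty_of_forall_notMem fun p hp => ?_⟩
  have hΩ : Icc a b ×ˢ Ioo (-ε) ε ⊆ Icc a b ×ˢ Ioo (-ε₀) ε₀ :=
    prod_mono le_rfl (Ioo_subset_Ioo (neg_le_neg hεε₀) hεε₀)
  obtain ⟨q, hq, hne, hpq⟩ := hW p hp
  refine hne (hsep p (hΩ hp.2) q (hΩ hq) ?_).symm
  obtain ⟨t, v⟩ := p
  obtain ⟨t', v'⟩ := q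
  simpa only [hφ, hψ, hf, hfc, origami_apply] using hpq
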